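/- arXiv:1711.02665 — 2 statements merged into one kernel-verified Lean document; each statement's English description precedes it below -/
import Mathlib

section
/- For all x ≥ 4, the sum over primes p ≤ x/2 of π(x/p) is at least (x/log x)·log log x + O(x/log x), where π is the prime counting function. -/
/-!
The sum counts pairs of primes `(p, q)` with `p * q ≤ x`. Take `m ≈ x ^ (1/4)`. For `p ≤ m`,
Chebyshev's bound gives `π (x / p) ≥ log 2 * (x / p) / log x - O(1)`, and
`∑_{p ≤ m} 1 / p ≥ log log m - log 2` (write each `n ≤ m` as a square times a product of distinct
primes `≤ m`, so `log m ≤ H_m ≤ 2 ∏ (1 + 1/p) ≤ 2 exp (∑ 1/p)`); this yields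
`log 2 * (x / log x) * log log x - O(x / log x)` pairs with `p ≤ m`. Swapping `p` and `q` gives
as many pairs with `p > m`, up to `π(m)²` pairs with both factors `≤ m`, and `2 log 2 > 1`.
-/

open Finset Real
open Nat (primeCounting primesLE)

theorem Nat.primeCounting_le_self (n : ℕ) : primeCounting n ≤ n := by
  rw [← Nat.primesLE_card_eq_primeCounting, Nat.primesLE_eq_filter_Icc_one]
  exact (card_filter_le _ _).trans (by simp)

theorem log_two_mul_div_log_sub_three_le_primeCounting {x y : ℝ} (hx : 3 ≤ x) (hy : 1 ≤ y)
    (hyx : y ≤ x) : log 2 * y / log x - 3 ≤ primeCounting ⌊y⌋₊ := by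
  have hψ := Chebyshev.psi_ge' (by linarith : 0 ≤ y)
  have hπ := Chebyshev.psi_le_primeCounting_mul_log' y
  have hL : 1 ≤ log x := by
    rw [le_log_iff_exp_le (by linarith)]
    linarith [exp_one_lt_d9]
  have hlog_y : log y ≤ log x := log_le_log (by linarith) hyx
  have hlog_y2 : log (y + 2) ≤ log 2 + log x := by
    rw [← log_mul two_ne_zero (by linarith)]
    exact log_le_log (by linarith) (by linarith)
  have hπ_nonneg : (0 : ℝ) ≤ primeCounting ⌊y⌋₊ := Nat.cast_nonneg _
  have hlog2 : log 2 < 1 := by linarith [log_two_lt_d9]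
  rw [sub_le_iff_le_add, div_le_iff₀ (by linarith)]
  nlinarith [mul_le_mul_of_nonneg_left hlog_y hπ_nonneg]

theorem sum_inv_le_two_mul_prod_primesLE (m : ℕ) :
    ∑ n ∈ Icc 1 m, (n : ℝ)⁻¹ ≤ 2 * ∏ p ∈ primesLE m, (1 + (p : ℝ)⁻¹) := by
  classical
  set F : Finset ℕ × ℕ → ℕ := fun sk => sk.2 ^ 2 * ∏ p ∈ sk.1, p
  set B := (primesLE m).powerset ×ˢ Icc 1 m
  have hcover : Icc 1 m ⊆ B.image F := by
    intro n hn
    rw [mem_Icc] at hn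
    obtain ⟨s, hs, k, hnk⟩ := Nat.eq_prod_primes_mul_sq_of_mem_smoothNumbers
      (Nat.mem_smoothNumbers_of_lt (by omega : 0 < n) (by omega : n < m + 1))
    have hs_pos : 0 < s.prod id := prod_pos fun p hp =>
      (Nat.prime_of_mem_primesBelow (mem_powerset.mp hs hp)).pos
    have hk : 0 < k := Nat.pos_of_ne_zero <| by
      rintro rfl
      rw [zero_pow two_ne_zero, zero_mul] at hnk
      omega
    refine mem_image.mpr ⟨(s, k), mem_product.mpr ⟨hs, mem_Icc.mpr ⟨hk, ?_⟩⟩, ?_⟩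
    · nlinarith
    · simp [F, hnk]
  calc ∑ n ∈ Icc 1 m, (n : ℝ)⁻¹
      ≤ ∑ n ∈ B.image F, (n : ℝ)⁻¹ :=
        sum_le_sum_of_subset_of_nonneg hcover fun _ _ _ => by positivity
    _ ≤ ∑ sk ∈ B, (F sk : ℝ)⁻¹ := sum_image_le_of_nonneg fun _ _ => by positivity
    _ = (∑ s ∈ (primesLE m).powerset, ∏ p ∈ s, (p : ℝ)⁻¹) * ∑ k ∈ Icc 1 m, ((k : ℝ) ^ 2)⁻¹ := by
        rw [sum_mul_sum, sum_product]
        simp [F, mul_comm]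
    _ ≤ (∏ p ∈ primesLE m, (1 + (p : ℝ)⁻¹)) * 2 := by
        gcongr
        · exact (prod_one_add _).ge
        · have h := sum_Ioo_inv_sq_le (α := ℝ) 0 (m + 1)
          rwa [show Ioo 0 (m + 1) = Icc 1 m by ext; simp only [mem_Ioo, mem_Icc]; omega, CharP.cast_eq_zero, zero_add,
            div_one] at h
    _ = _ := mul_comm _ _

theorem log_log_sub_log_two_le_sum_inv_primesLE {m : ℕ} (hm : 2 ≤ m) :
    log (log m) - log 2 ≤ ∑ p ∈ primesLE m, (p : ℝ)⁻¹ := by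
  have hlog_pos : 0 < log m := log_pos (by exact_mod_cast hm)
  have hharmonic : log m ≤ ∑ n ∈ Icc 1 m, (n : ℝ)⁻¹ := by
    simpa [harmonic_eq_sum_Icc] using log_le_harmonic_floor (m : ℝ) m.cast_nonneg
  have hprod : ∏ p ∈ primesLE m, (1 + (p : ℝ)⁻¹) ≤ exp (∑ p ∈ primesLE m, (p : ℝ)⁻¹) := by
    rw [exp_sum]
    exact prod_le_prod (fun _ _ => by positivity) fun p _ => by
      linarith [add_one_le_exp (p : ℝ)⁻¹]
  have h := log_le_log hlog_pos <| hharmonic.trans <|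
    (sum_inv_le_two_mul_prod_primesLE m).trans (mul_le_mul_of_nonneg_left hprod zero_le_two)
  rwa [log_mul two_ne_zero (exp_pos _).ne', log_exp, ← sub_le_iff_le_add'] at h

theorem Nat.le_floor_div_iff_mul_le {x : ℝ} (hx : 0 ≤ x) {p q : ℕ} (hp : 0 < p) :
    q ≤ ⌊x / p⌋₊ ↔ (p * q : ℝ) ≤ x := by
  rw [Nat.le_floor_iff (by positivity), le_div_iff₀ (by exact_mod_cast hp), mul_comm]

theorem two_mul_sum_primesLE_sub_sq_le {x : ℝ} {m : ℕ} (hm : 2 * m ≤ x) :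
    2 * ∑ p ∈ primesLE m, (primeCounting ⌊x / p⌋₊ : ℝ) - (primeCounting m : ℝ) ^ 2 ≤
      ∑ p ∈ primesLE ⌊x / 2⌋₊, (primeCounting ⌊x / p⌋₊ : ℝ) := by
  classical
  set T := primesLE ⌊x / 2⌋₊
  set P := primesLE m
  have hx : 0 ≤ x := by linarith [m.cast_nonneg (α := ℝ)]
  let r : ℕ → ℕ → Prop := fun p q => (p * q : ℝ) ≤ x
  have hPT : P ⊆ T := Nat.primesLE_mono (Nat.le_floor (by linarith))
  have h_large : ∀ p ∈ T \ P, #(P.bipartiteAbove r p) ≤ primeCounting ⌊x / p⌋₊ := by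
    intro p hp
    have hp_prime := Nat.prime_of_mem_primesLE (mem_sdiff.mp hp).1
    rw [← Nat.primesLE_card_eq_primeCounting]
    refine card_le_card fun q hq => ?_
    rw [mem_bipartiteAbove r, Nat.mem_primesLE] at hq
    rw [Nat.mem_primesLE, Nat.le_floor_div_iff_mul_le hx hp_prime.pos]
    exact ⟨hq.2, hq.1.2⟩
  have h_small : ∀ q ∈ P,
      (primeCounting ⌊x / q⌋₊ : ℝ) - primeCounting m ≤ #((T \ P).bipartiteBelow r q) := by
    intro q hq
    have hq_two := Nat.two_le_of_mem_primesLE hq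
    have hsub : primesLE ⌊x / q⌋₊ \ P ⊆ (T \ P).bipartiteBelow r q := by
      intro p hp
      obtain ⟨hp_le, hp_notMem⟩ := mem_sdiff.mp hp
      rw [Nat.mem_primesLE, Nat.le_floor_div_iff_mul_le hx (by omega)] at hp_le
      have hpq : (p * q : ℝ) ≤ x := by linarith
      refine (mem_bipartiteBelow r).mpr ⟨mem_sdiff.mpr ⟨?_, hp_notMem⟩, hpq⟩
      have h2q : (2 : ℝ) ≤ q := by exact_mod_cast hq_two
      rw [Nat.mem_primesLE, ← Nat.cast_ofNat, Nat.le_floor_div_iff_mul_le hx two_pos]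
      exact ⟨by push_cast; nlinarith [p.cast_nonneg (α := ℝ)], hp_le.2⟩
    rw [sub_le_iff_le_add, ← Nat.primesLE_card_eq_primeCounting,
      ← Nat.primesLE_card_eq_primeCounting]
    exact_mod_cast (card_le_card_sdiff_add_card).trans (by gcongr)
  calc 2 * ∑ p ∈ P, (primeCounting ⌊x / p⌋₊ : ℝ) - (primeCounting m : ℝ) ^ 2
      = ∑ p ∈ P, (primeCounting ⌊x / p⌋₊ : ℝ)
          + ∑ q ∈ P, ((primeCounting ⌊x / q⌋₊ : ℝ) - primeCounting m) := by
        rw [sum_sub_distrib, sum_const, Nat.primesLE_card_eq_primeCounting, nsmul_eq_mul]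
        ring
    _ ≤ ∑ p ∈ P, (primeCounting ⌊x / p⌋₊ : ℝ) + ∑ q ∈ P, (#((T \ P).bipartiteBelow r q) : ℝ) := by
        gcongr with q hq
        exact h_small q hq
    _ = ∑ p ∈ P, (primeCounting ⌊x / p⌋₊ : ℝ) + ∑ p ∈ T \ P, (#(P.bipartiteAbove r p) : ℝ) := by
        rw_mod_cast [sum_card_bipartiteAbove_eq_sum_card_bipartiteBelow]
    _ ≤ ∑ p ∈ P, (primeCounting ⌊x / p⌋₊ : ℝ) + ∑ p ∈ T \ P, (primeCounting ⌊x / p⌋₊ : ℝ) := by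
        gcongr with p hp
        exact_mod_cast h_large p hp
    _ = ∑ p ∈ T, (primeCounting ⌊x / p⌋₊ : ℝ) := by
        rw [add_comm, sum_sdiff hPT]

theorem sum_primeCounting_div_ge {x : ℝ} (hx : 3 ≤ x) {m : ℕ} (hm : 2 ≤ m) (hmx : 2 * m ≤ x) :
    2 * log 2 * (x / log x) * (log (log m) - log 2) - 4 * m ^ 2 ≤
      ∑ p ∈ primesLE ⌊x / 2⌋₊, (primeCounting ⌊x / p⌋₊ : ℝ) := by
  have hL : 0 < log x := log_pos (by linarith)
  have hcheb : ∀ p ∈ primesLE m, log 2 * x / log x * (p : ℝ)⁻¹ - 3 ≤ primeCounting ⌊x / p⌋₊ := by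
    intro p hp
    have hp_two : (2 : ℝ) ≤ p := by exact_mod_cast Nat.two_le_of_mem_primesLE hp
    have hpm : (p : ℝ) ≤ m := by exact_mod_cast Nat.le_of_mem_primesLE hp
    have h := log_two_mul_div_log_sub_three_le_primeCounting (y := x / p) hx
      ((one_le_div (by linarith)).mpr (by linarith)) (div_le_self (by linarith) (by linarith))
    convert h using 2
    field_simp
  have hsum : log 2 * x / log x * (log (log m) - log 2) - 3 * primeCounting m ≤
      ∑ p ∈ primesLE m, (primeCounting ⌊x / p⌋₊ : ℝ) := by
    calc log 2 * x / log x * (log (log m) - log 2) - 3 * primeCounting m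
        ≤ log 2 * x / log x * ∑ p ∈ primesLE m, (p : ℝ)⁻¹ - 3 * primeCounting m := by
          gcongr
          exact log_log_sub_log_two_le_sum_inv_primesLE hm
      _ = ∑ p ∈ primesLE m, (log 2 * x / log x * (p : ℝ)⁻¹ - 3) := by
          rw [sum_sub_distrib, mul_sum, sum_const, Nat.primesLE_card_eq_primeCounting,
            nsmul_eq_mul, mul_comm (3 : ℝ)]
      _ ≤ _ := sum_le_sum hcheb
  have hπm : (primeCounting m : ℝ) ≤ m := by exact_mod_cast Nat.primeCounting_le_self m
  have hπm_nonneg : (0 : ℝ) ≤ primeCounting m := Nat.cast_nonneg _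
  have hm_two : (2 : ℝ) ≤ m := by exact_mod_cast hm
  have hswap := two_mul_sum_primesLE_sub_sq_le hmx
  have hrw : 2 * log 2 * (x / log x) = 2 * (log 2 * x / log x) := by ring
  rw [hrw]
  nlinarith

theorem exists_nat_sq_le_and_log_ge {x : ℝ} (hx : 256 ≤ x) :
    ∃ m : ℕ, 2 ≤ m ∧ 2 * m ≤ x ∧ (m : ℝ) ^ 2 ≤ 2 * (x / log x) ∧ log x / 8 ≤ log m := by
  have hx0 : 0 ≤ x := by linarith
  set z := √√x
  have hz_sq : z ^ 2 = √x := sq_sqrt (sqrt_nonneg x)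
  have hsqrt_sq : √x ^ 2 = x := sq_sqrt hx0
  have hz_four : 4 ≤ z := by
    rw [le_sqrt (by norm_num) (sqrt_nonneg x), le_sqrt (by norm_num) hx0]
    linarith
  have hlog_z : log z = log x / 4 := by
    rw [log_sqrt (sqrt_nonneg x), log_sqrt hx0]
    ring
  have hlog_x : 8 * log 2 ≤ log x := by
    have h := log_le_log (by norm_num) (show (2 : ℝ) ^ 8 ≤ x by linarith)
    rwa [log_pow, Nat.cast_ofNat] at h
  have hm_le : (⌊z⌋₊ : ℝ) ≤ z := Nat.floor_le (by linarith)
  have hm_gt : z < ⌊z⌋₊ + 1 := Nat.lt_floor_add_one z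
  have hm_sq : (⌊z⌋₊ : ℝ) ^ 2 ≤ √x := hz_sq ▸ pow_le_pow_left₀ (Nat.cast_nonneg _) hm_le 2
  have hm_two : 2 ≤ ⌊z⌋₊ := Nat.le_floor (by norm_num; linarith)
  have hsqrt_le : √x ≤ x := by nlinarith
  refine ⟨⌊z⌋₊, hm_two, ?_, ?_, ?_⟩
  · have : (2 : ℝ) ≤ ⌊z⌋₊ := by exact_mod_cast hm_two
    nlinarith
  · have hL : 0 < log x := by linarith [log_pos (by norm_num : (1 : ℝ) < 2)]
    have hlog_sqrt : log x / 2 ≤ √x := by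
      rw [← log_sqrt hx0]
      exact (log_le_sub_one_of_pos (by positivity)).trans (by linarith)
    rw [mul_div_assoc', le_div_iff₀ hL]
    calc (⌊z⌋₊ : ℝ) ^ 2 * log x ≤ √x * (2 * √x) := by gcongr; linarith
      _ = 2 * x := by linear_combination 2 * hsqrt_sq
  · calc log x / 8 ≤ log (z / 2) := by
          rw [log_div (by positivity) two_ne_zero, hlog_z]
          linarith
      _ ≤ log ⌊z⌋₊ := log_le_log (by positivity) (by linarith)

theorem mul_log_log_sub_le_sum_primeCounting_div {x : ℝ} (hx : 256 ≤ x) :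
    x / log x * log (log x) - 12 * (x / log x) ≤
      ∑ p ∈ primesLE ⌊x / 2⌋₊, (primeCounting ⌊x / p⌋₊ : ℝ) := by
  obtain ⟨m, hm, hmx, hm_sq, hlog_m⟩ := exists_nat_sq_le_and_log_ge hx
  have hL : 1 < log x := by
    rw [lt_log_iff_exp_lt (by linarith)]
    linarith [exp_one_lt_d9]
  have hxL : 0 ≤ x / log x := by positivity
  have hloglog : log (log x) - log 8 ≤ log (log m) := by
    rw [← log_div (by linarith) (by norm_num)]
    exact log_le_log (by positivity) hlog_m
  have hlog8 : log 8 = 3 * log 2 := by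
    rw [show (8 : ℝ) = 2 ^ 3 by norm_num, log_pow]
    norm_num
  have hlog2 : log 2 < 0.7 := by linarith [log_two_lt_d9]
  have hlog2_pos : 1 / 2 < log 2 := by linarith [log_two_gt_d9]
  have hloglog_nonneg : 0 ≤ log (log x) := log_nonneg hL.le
  have hloglog_m : log (log x) - 4 * log 2 ≤ log (log m) - log 2 := by linarith
  calc x / log x * log (log x) - 12 * (x / log x)
      ≤ 2 * log 2 * (x / log x) * (log (log x) - 4 * log 2) - 4 * (2 * (x / log x)) := by
        nlinarith [mul_nonneg hxL hloglog_nonneg, mul_nonneg hxL (sub_nonneg.mpr hlog2.le)]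
    _ ≤ 2 * log 2 * (x / log x) * (log (log m) - log 2) - 4 * m ^ 2 := by
        gcongr 2 * log 2 * (x / log x) * ?_ - 4 * ?_
    _ ≤ _ := sum_primeCounting_div_ge (by linarith) hm hmx

theorem stmt1 : ∃ C : ℝ, 0 < C ∧ ∀ x : ℝ, 4 ≤ x →
    ((∑ p ∈ (Finset.Icc 1 ⌊x / 2⌋₊).filter Nat.Prime,
        (Nat.primeCounting ⌊x / (p : ℝ)⌋₊ : ℝ)) ≥
      (x / Real.log x) * Real.log (Real.log x) - C * (x / Real.log x)) := by
  refine ⟨12, by norm_num, fun x hx => ?_⟩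
  rw [← Nat.primesLE_eq_filter_Icc_one, ge_iff_le]
  rcases lt_or_ge x 256 with hx_small | hx_large
  · have hL : 0 < log x := log_pos (by linarith)
    have hloglog : log (log x) ≤ 12 := by
      have h := log_le_log (by linarith) (by linarith : x ≤ 2 ^ 8)
      rw [log_pow, Nat.cast_ofNat] at h
      linarith [log_le_self hL.le, log_two_lt_d9]
    have hS : 0 ≤ ∑ p ∈ primesLE ⌊x / 2⌋₊, (primeCounting ⌊x / p⌋₊ : ℝ) :=
      sum_nonneg fun _ _ => Nat.cast_nonneg _
    nlinarith [mul_le_mul_of_nonneg_left hloglog (by positivity : 0 ≤ x / log x)]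
  · exact mul_log_log_sub_le_sum_primeCounting_div hx_large
end

section
/- If n is squarefree with exactly r ≥ 1 distinct prime factors p₁, …, p_r, then ∑_{d | n} Υ(d) = (r−1)·∑_{i=1}^r log p_i for r ≥ 2, and equals 0 for r = 1. -/
/-!
A squarefree `n` has exactly one divisor `∏ p ∈ s, p` for each set `s` of its prime factors, and
`Υ` vanishes on all of them except those with `#s = 2`, where it is `∑ p ∈ s, log p`. So the sum
runs over the pairs of prime factors, and each prime lies in exactly `r - 1` of them.
-/

open Finset Real ArithmeticFunction

open scoped Classical in
noncomputable def Upsilon (n : ℕ) : ℝ :=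
  if ∃ p : ℕ, p.Prime ∧ n = p ^ 2 then Real.log (Nat.sqrt n)
  else if ∃ p q : ℕ, p.Prime ∧ q.Prime ∧ p ≠ q ∧ n = p * q then Real.log n
  else 0

theorem Finset.sum_powersetCard_sum {α M : Type*} [DecidableEq α] [AddCommMonoid M]
    (S : Finset α) {k : ℕ} (hk : 1 ≤ k) (f : α → M) :
    ∑ t ∈ S.powersetCard k, ∑ a ∈ t, f a = (#S - 1).choose (k - 1) • ∑ a ∈ S, f a := by
  rw [sum_comm' (t' := S) (s' := fun a ↦ {t ∈ S.powersetCard k | a ∈ t})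
    (by simp only [mem_powersetCard, mem_filter]; grind), smul_sum]
  refine sum_congr rfl fun a ha ↦ ?_
  have hcount := card_filter_powersetCard_subset {a} S k (singleton_subset_iff.2 ha)
    (by simpa using hk)
  simp only [singleton_subset_iff, card_singleton] at hcount
  rw [sum_const, hcount]

theorem Nat.sum_divisors_eq_sum_powerset_primeFactors {n : ℕ} (hn : Squarefree n)
    {M : Type*} [AddCommMonoid M] (f : ℕ → M) :
    ∑ d ∈ n.divisors, f d = ∑ s ∈ n.primeFactors.powerset, f (∏ p ∈ s, p) := by
  rw [← divisors_filter_squarefree_of_squarefree hn, sum_divisors_filter_squarefree hn.ne_zero,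
    factors_eq]
  simp

theorem Upsilon_of_squarefree {d : ℕ} (hd : Squarefree d) :
    Upsilon d = if #d.primeFactors = 2 then Real.log d else 0 := by
  have not_sq : ¬ ∃ p : ℕ, p.Prime ∧ d = p ^ 2 := by
    rintro ⟨p, hp, rfl⟩
    exact hp.not_isUnit (hd p (sq p).symm.dvd)
  rw [Upsilon, if_neg not_sq]
  congr 1
  refine propext ⟨?_, fun h2 ↦ ?_⟩
  · rintro ⟨p, q, hp, hq, hpq, rfl⟩
    rw [Nat.primeFactors_mul hp.ne_zero hq.ne_zero, hp.primeFactors, hq.primeFactors,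
      ← insert_eq, card_pair hpq]
  · obtain ⟨p, q, hpq, hpf⟩ := card_eq_two.mp h2
    have hp : p ∈ d.primeFactors := by simp [hpf]
    have hq : q ∈ d.primeFactors := by simp [hpf]
    refine ⟨p, q, Nat.prime_of_mem_primeFactors hp, Nat.prime_of_mem_primeFactors hq, hpq, ?_⟩
    rw [← Nat.prod_primeFactors_of_squarefree hd, hpf, prod_pair hpq]

theorem Upsilon_prod_of_subset_primeFactors {n : ℕ} (hn : Squarefree n) {s : Finset ℕ}
    (hs : s ⊆ n.primeFactors) :
    Upsilon (∏ p ∈ s, p) = if #s = 2 then ∑ p ∈ s, Real.log p else 0 := by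
  have hprime : ∀ p ∈ s, p.Prime := fun p hp ↦ Nat.prime_of_mem_primeFactors (hs hp)
  have hdvd : ∏ p ∈ s, p ∣ n :=
    Nat.prod_primeFactors_of_squarefree hn ▸ prod_dvd_prod_of_subset _ _ _ hs
  rw [Upsilon_of_squarefree (hn.squarefree_of_dvd hdvd), Nat.primeFactors_prod hprime,
    Nat.cast_prod, Real.log_prod fun p hp ↦ by exact_mod_cast (hprime p hp).ne_zero]

theorem stmt14 (n r : ℕ) (hn : Squarefree n) (hr : 1 ≤ r)
    (hcard : n.primeFactors.card = r) :
    ∑ d ∈ n.divisors, Upsilon d =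
      ((r : ℝ) - 1) * ∑ p ∈ n.primeFactors, Real.log p := by
  calc ∑ d ∈ n.divisors, Upsilon d
      = ∑ s ∈ n.primeFactors.powerset, if #s = 2 then ∑ p ∈ s, Real.log p else 0 := by
        rw [Nat.sum_divisors_eq_sum_powerset_primeFactors hn]
        exact sum_congr rfl fun s hs ↦
          Upsilon_prod_of_subset_primeFactors hn (mem_powerset.mp hs)
    _ = ∑ s ∈ n.primeFactors.powersetCard 2, ∑ p ∈ s, Real.log p := by
        rw [powersetCard_eq_filter, sum_filter]
    _ = ((r : ℝ) - 1) * ∑ p ∈ n.primeFactors, Real.log p := by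
        rw [sum_powersetCard_sum _ one_le_two, show 2 - 1 = 1 from rfl, Nat.choose_one_right,
          nsmul_eq_mul, hcard, Nat.cast_sub hr, Nat.cast_one]
end
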